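/- arXiv:1903.03873 — 2 statements merged into one kernel-verified Lean document; each statement's English description precedes it below -/
import Mathlib

section
/- (Rigidity at the special temperature; Corollary cor:bounds.) Suppose A = −B²/(3C) and let (q₁, q₂, q₃) be a solution of (EL123)–(BC123) with q₃ < 0 everywhere in Ω. Then q₃(x,y) = −s₊/6 for every (x,y) ∈ Ω. -/
open MeasureTheory Set

noncomputable section

/-- `s₊ = (B + √(B² + 24|A|C))/(4C)`. -/
def splus (A B C : ℝ) : ℝ := (B + Real.sqrt (B ^ 2 + 24 * |A| * C)) / (4 * C)

/-- `s₋ = (B − √(B² + 24|A|C))/(4C)`. -/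
def sminus (A B C : ℝ) : ℝ := (B - Real.sqrt (B ^ 2 + 24 * |A| * C)) / (4 * C)

/-- The truncated square `Ω`. -/
def TSq (η : ℝ) : Set (ℝ × ℝ) :=
  {p | |p.1| < 1 - η ∧ |p.2| < 1 - η ∧ |p.1 + p.2| < 1 ∧ |p.1 - p.2| < 1}

/-- Long edge `C₁` on the line `x + y = 1`. -/
def edgeC1 (η : ℝ) : Set (ℝ × ℝ) := {p | p.1 + p.2 = 1 ∧ η ≤ p.1 ∧ p.1 ≤ 1 - η}
/-- Long edge `C₂` on the line `y − x = 1`. -/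
def edgeC2 (η : ℝ) : Set (ℝ × ℝ) := {p | p.2 - p.1 = 1 ∧ -(1 - η) ≤ p.1 ∧ p.1 ≤ -η}
/-- Long edge `C₃` on the line `x + y = −1`. -/
def edgeC3 (η : ℝ) : Set (ℝ × ℝ) := {p | p.1 + p.2 = -1 ∧ -(1 - η) ≤ p.1 ∧ p.1 ≤ -η}
/-- Long edge `C₄` on the line `x − y = 1`. -/
def edgeC4 (η : ℝ) : Set (ℝ × ℝ) := {p | p.1 - p.2 = 1 ∧ η ≤ p.1 ∧ p.1 ≤ 1 - η}
/-- Short edge `S₁`, `x = 1 − η`. -/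
def edgeS1 (η : ℝ) : Set (ℝ × ℝ) := {p | p.1 = 1 - η ∧ |p.2| ≤ η}
/-- Short edge `S₂`, `y = 1 − η`. -/
def edgeS2 (η : ℝ) : Set (ℝ × ℝ) := {p | p.2 = 1 - η ∧ |p.1| ≤ η}
/-- Short edge `S₃`, `x = −(1 − η)`. -/
def edgeS3 (η : ℝ) : Set (ℝ × ℝ) := {p | p.1 = -(1 - η) ∧ |p.2| ≤ η}
/-- Short edge `S₄`, `y = −(1 − η)`. -/
def edgeS4 (η : ℝ) : Set (ℝ × ℝ) := {p | p.2 = -(1 - η) ∧ |p.1| ≤ η}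

/-- The interpolating boundary function `g₀(s) = s₊ s/(2η)`. -/
def g0 (A B C η s : ℝ) : ℝ := splus A B C * s / (2 * η)

/-- The two-dimensional Laplacian: sum of the two second partial derivatives. -/
def lap2 (q : ℝ × ℝ → ℝ) (p : ℝ × ℝ) : ℝ :=
  deriv (deriv fun x => q (x, p.2)) p.1 + deriv (deriv fun y => q (p.1, y)) p.2

/-- `|∇q|²` in two dimensions. -/
def gradSq2 (q : ℝ × ℝ → ℝ) (p : ℝ × ℝ) : ℝ :=
  (deriv (fun x => q (x, p.2)) p.1) ^ 2 + (deriv (fun y => q (p.1, y)) p.2) ^ 2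

/-- The Dirichlet boundary condition `q₁ = q₁b` on `∂Ω`. -/
def BC1 (A B C η : ℝ) (q1 : ℝ × ℝ → ℝ) : Prop :=
  (∀ p ∈ edgeC1 η ∪ edgeC3 η, q1 p = -(splus A B C) / 2) ∧
  (∀ p ∈ edgeC2 η ∪ edgeC4 η, q1 p = splus A B C / 2) ∧
  (∀ p ∈ edgeS1 η ∪ edgeS3 η, q1 p = g0 A B C η p.2) ∧
  (∀ p ∈ edgeS2 η ∪ edgeS4 η, q1 p = g0 A B C η p.1)

/-- A solution of the system (EL123) with boundary conditions (BC123):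
a triple of functions in `C²(Ω) ∩ C(Ω̄)` satisfying the three PDEs in `Ω`,
with `q₁ = q₁b`, `q₂ = 0`, `q₃ = −s₊/6` on `∂Ω`. -/
def IsSolEL123 (A B C L lam η : ℝ) (q1 q2 q3 : ℝ × ℝ → ℝ) : Prop :=
  ContDiffOn ℝ 2 q1 (TSq η) ∧ ContDiffOn ℝ 2 q2 (TSq η) ∧ ContDiffOn ℝ 2 q3 (TSq η) ∧
  ContinuousOn q1 (closure (TSq η)) ∧ ContinuousOn q2 (closure (TSq η)) ∧
  ContinuousOn q3 (closure (TSq η)) ∧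
  (∀ p ∈ TSq η, lap2 q1 p =
    lam ^ 2 / L * q1 p *
      (A + 2 * B * q3 p + 2 * C * ((q1 p) ^ 2 + (q2 p) ^ 2 + 3 * (q3 p) ^ 2))) ∧
  (∀ p ∈ TSq η, lap2 q2 p =
    lam ^ 2 / L * q2 p *
      (A + 2 * B * q3 p + 2 * C * ((q1 p) ^ 2 + (q2 p) ^ 2 + 3 * (q3 p) ^ 2))) ∧
  (∀ p ∈ TSq η, lap2 q3 p =
    lam ^ 2 / L * q3 p *
      (A - B * q3 p + 2 * C * ((q1 p) ^ 2 + (q2 p) ^ 2 + 3 * (q3 p) ^ 2))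
      + lam ^ 2 * B / (3 * L) * ((q1 p) ^ 2 + (q2 p) ^ 2)) ∧
  BC1 A B C η q1 ∧
  (∀ p ∈ frontier (TSq η), q2 p = 0) ∧
  (∀ p ∈ frontier (TSq η), q3 p = -(splus A B C) / 6)

/-!
At `A = -B²/(3C)` one has `s₊ = B/C`, and the `q₃`-equation factors as `Δw = k w` for
`w = q₃ + s₊/6` and `k = (2Cλ²/L) (3q₃(q₃ - B/(3C)) + q₁² + q₂²)`, which is positive where
`q₃ < 0`. As `w` vanishes on `∂Ω`, the maximum principle applied to `w` and `-w` forces `w = 0`.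
-/

open Filter Topology

/-- If `deriv (deriv f) a > 0`, the second-derivative test makes `a` also a local minimum, so
`f` is locally constant and `deriv (deriv f) a = 0`; hence no differentiability is needed. -/
theorem IsLocalMax.deriv_deriv_nonpos {f : ℝ → ℝ} {a : ℝ} (hf : ContinuousAt f a)
    (hmax : IsLocalMax f a) : deriv (deriv f) a ≤ 0 := by
  by_contra! hpos
  have hmin : IsLocalMin f a := isLocalMin_of_deriv_deriv_pos hpos hmax.deriv_eq_zero hf
  have hconst : f =ᶠ[𝓝 a] fun _ => f a :=
    (hmax.and hmin).mono fun _ hx => le_antisymm hx.1 hx.2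
  have hderiv : deriv f =ᶠ[𝓝 a] fun _ => 0 :=
    hconst.eventuallyEq_nhds.mono fun _ hx => by rw [hx.deriv_eq, deriv_const]
  rw [hderiv.deriv_eq, deriv_const] at hpos
  exact lt_irrefl 0 hpos

theorem IsLocalMax.lap2_nonpos {f : ℝ × ℝ → ℝ} {z : ℝ × ℝ} (hf : ContinuousAt f z)
    (hmax : IsLocalMax f z) : lap2 f z ≤ 0 := by
  have hx : deriv (deriv fun x => f (x, z.2)) z.1 ≤ 0 :=
    IsLocalMax.deriv_deriv_nonpos (hf.comp (by fun_prop))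
      (((continuous_id.prodMk continuous_const).tendsto z.1).eventually hmax)
  have hy : deriv (deriv fun y => f (z.1, y)) z.2 ≤ 0 :=
    IsLocalMax.deriv_deriv_nonpos (hf.comp (by fun_prop))
      (((continuous_const.prodMk continuous_id).tendsto z.2).eventually hmax)
  exact add_nonpos hx hy

theorem nonpos_of_lap2_pos {U : Set (ℝ × ℝ)} (hU : IsOpen U) (hb : Bornology.IsBounded U)
    {f : ℝ × ℝ → ℝ} (hfc : ContinuousOn f (closure U)) (hfr : ∀ p ∈ frontier U, f p ≤ 0)
    (hlap : ∀ p ∈ U, 0 < f p → 0 < lap2 f p) :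
    ∀ p ∈ U, f p ≤ 0 := by
  intro p hp
  by_contra! hfp
  obtain ⟨z, hzc, hz⟩ := hb.isCompact_closure.exists_isMaxOn ⟨p, subset_closure hp⟩ hfc
  have hfz : 0 < f z := hfp.trans_le (hz (subset_closure hp))
  have hzU : z ∈ U := by
    by_contra hzU
    exact (hfr z (hU.frontier_eq ▸ ⟨hzc, hzU⟩)).not_gt hfz
  have hzn : closure U ∈ 𝓝 z := mem_of_superset (hU.mem_nhds hzU) subset_closure
  exact (hlap z hzU hfz).not_ge
    ((hz.isLocalMax hzn).lap2_nonpos ((hfc z hzc).continuousAt hzn))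

theorem lap2_neg (f : ℝ × ℝ → ℝ) (p : ℝ × ℝ) : lap2 (fun p => -f p) p = -lap2 f p := by
  simp only [lap2, deriv.fun_neg', neg_add]

theorem lap2_add_const (f : ℝ × ℝ → ℝ) (c : ℝ) (p : ℝ × ℝ) :
    lap2 (fun p => f p + c) p = lap2 f p := by
  simp only [lap2, deriv_add_const']

theorem eq_zero_of_lap2_eq_mul {U : Set (ℝ × ℝ)} (hU : IsOpen U) (hb : Bornology.IsBounded U)
    {w k : ℝ × ℝ → ℝ} (hwc : ContinuousOn w (closure U)) (hwr : ∀ p ∈ frontier U, w p = 0)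
    (hlap : ∀ p ∈ U, lap2 w p = k p * w p) (hk : ∀ p ∈ U, 0 < k p) :
    ∀ p ∈ U, w p = 0 := by
  have hle : ∀ p ∈ U, w p ≤ 0 :=
    nonpos_of_lap2_pos hU hb hwc (fun p hp => (hwr p hp).le) fun p hp hwp => by
      rw [hlap p hp]; exact mul_pos (hk p hp) hwp
  have hge : ∀ p ∈ U, -w p ≤ 0 :=
    nonpos_of_lap2_pos hU hb hwc.neg (fun p hp => by simp [hwr p hp]) fun p hp hwp => by
      rw [lap2_neg, hlap p hp]; nlinarith [hk p hp]
  exact fun p hp => le_antisymm (hle p hp) (by linarith [hge p hp])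

theorem isOpen_TSq (η : ℝ) : IsOpen (TSq η) := by
  simp only [TSq, ofPred_and]
  apply_rules [IsOpen.inter, isOpen_lt] <;> fun_prop

theorem TSq_subset_ball (η : ℝ) : TSq η ⊆ Metric.ball 0 1 := by
  rintro p ⟨-, -, hsum, hdiff⟩
  rw [abs_lt] at hsum hdiff
  rw [Metric.mem_ball, Prod.dist_eq, max_lt_iff, Real.dist_eq, Real.dist_eq]
  simp only [Prod.fst_zero, Prod.snd_zero, sub_zero, abs_lt]
  refine ⟨⟨?_, ?_⟩, ?_, ?_⟩ <;> linarith

theorem splus_eq_div {B C : ℝ} (hB : 0 ≤ B) (hC : 0 < C) : splus (-(B ^ 2) / (3 * C)) B C = B / C := by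
  have hdisc : B ^ 2 + 24 * |-(B ^ 2) / (3 * C)| * C = (3 * B) ^ 2 := by
    rw [abs_div, abs_neg, abs_of_nonneg (sq_nonneg B), abs_of_pos (by positivity)]
    field_simp
    ring
  rw [splus, hdisc, Real.sqrt_sq (by positivity)]
  field_simp
  ring

theorem statement_6_general (A B C L lam η : ℝ) (hB : 0 < B) (hC : 0 < C)
    (hA : A = -(B ^ 2) / (3 * C))
    (hL : 0 < L) (hlam : 0 < lam)
    (q1 q2 q3 : ℝ × ℝ → ℝ) (hsol : IsSolEL123 A B C L lam η q1 q2 q3)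
    (hq3 : ∀ p ∈ TSq η, q3 p < 0) :
    ∀ p ∈ TSq η, q3 p = -(splus A B C) / 6 := by
  obtain ⟨-, -, -, -, -, hq3c, -, -, hpde3, -, -, hbc3⟩ := hsol
  have hs : splus A B C = B / C := hA ▸ splus_eq_div hB.le hC
  have hfactor : ∀ p ∈ TSq η, lap2 (fun p => q3 p + splus A B C / 6) p =
      lam ^ 2 / L * (2 * C) * (3 * q3 p * (q3 p - B / (3 * C)) + (q1 p ^ 2 + q2 p ^ 2)) *
        (q3 p + splus A B C / 6) := by
    intro p hp
    rw [lap2_add_const, hpde3 p hp, hs, hA]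
    field_simp
    ring
  have hk : ∀ p ∈ TSq η,
      0 < lam ^ 2 / L * (2 * C) * (3 * q3 p * (q3 p - B / (3 * C)) + (q1 p ^ 2 + q2 p ^ 2)) := by
    intro p hp
    have hneg : q3 p - B / (3 * C) < 0 := by
      linarith [hq3 p hp, show 0 < B / (3 * C) by positivity]
    have hsum : 0 < 3 * q3 p * (q3 p - B / (3 * C)) + (q1 p ^ 2 + q2 p ^ 2) :=
      add_pos_of_pos_of_nonneg (mul_pos_of_neg_of_neg (by linarith [hq3 p hp]) hneg)
        (by positivity)
    exact mul_pos (by positivity) hsum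
  have hw := eq_zero_of_lap2_eq_mul (isOpen_TSq η)
    (Metric.isBounded_ball.subset (TSq_subset_ball η)) (hq3c.add continuousOn_const)
    (fun p hp => by rw [Pi.add_apply, hbc3 p hp]; ring) hfactor hk
  intro p hp
  linarith [show q3 p + splus A B C / 6 = 0 from hw p hp]

/-- Corollary cor:bounds: at the special temperature `A = −B²/(3C)`,
any solution of (EL123)–(BC123) with `q₃ < 0` in `Ω` has `q₃ ≡ −s₊/6` in `Ω`. -/
theorem statement_6 (A B C L lam η : ℝ) (hB : 0 < B) (hC : 0 < C)
    (hA : A = -(B ^ 2) / (3 * C))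
    (hL : 0 < L) (hlam : 0 < lam) (hη : η ∈ Ioo (0 : ℝ) 1)
    (q1 q2 q3 : ℝ × ℝ → ℝ) (hsol : IsSolEL123 A B C L lam η q1 q2 q3)
    (hq3 : ∀ p ∈ TSq η, q3 p < 0) :
    ∀ p ∈ TSq η, q3 p = -(splus A B C) / 6 :=
  statement_6_general A B C L lam η hB hC hA hL hlam q1 q2 q3 hsol hq3
end
end

section
/- (Algebraic nonpositivity with equality case; step in the proof of Proposition prop:unstable.) Let A < 0, B > 0, C > 0 and s₊ := (B + √(B² + 24|A|C))/(4C). If real numbers q₁ and q₃ satisfy q₁² + 3q₃² ≤ s₊²/3 and q₃ ≤ −s₊/6, then A + 2Bq₃ + 2C(q₁² + 3q₃²) ≤ 0, with equality if and only if |q₁| = s₊/2 and q₃ = −s₊/6. -/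
/-!
`s₊` is the positive root of `2Cs² - Bs - 3|A|`. The quantity `A + 2Bq₃ + 2C(q₁² + 3q₃²)` is
increasing in `q₃` and in `q₁² + 3q₃²`, and at the corner `q₃ = -s₊/6`, `q₁² + 3q₃² = s₊²/3` of the
region it equals `A + (2Cs₊² - Bs₊)/3 = 0`.
-/

noncomputable section

lemma splus_pos {B C : ℝ} (A : ℝ) (hB : 0 < B) (hC : 0 < C) : 0 < splus A B C := by
  unfold splus
  positivity

lemma splus_quadratic (A B : ℝ) {C : ℝ} (hC : 0 < C) :
    2 * C * splus A B C ^ 2 - B * splus A B C = 3 * |A| := by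
  have hdisc : 0 ≤ B ^ 2 + 24 * |A| * C := by positivity
  have hroot : Real.sqrt (B ^ 2 + 24 * |A| * C) = 4 * C * splus A B C - B := by
    unfold splus
    field_simp
    ring
  have hsq := Real.sq_sqrt hdisc
  rw [hroot] at hsq
  have h8C : (8 * C) * (2 * C * splus A B C ^ 2 - B * splus A B C) = (8 * C) * (3 * |A|) := by
    linear_combination hsq
  exact mul_left_cancel₀ (by positivity) h8C

lemma affine_add_quadratic_nonpos_iff {A B C s q r : ℝ} (hB : 0 < B) (hC : 0 < C)
    (hs : 2 * C * s ^ 2 - B * s = -3 * A) (hr : r ≤ s ^ 2 / 3) (hq : q ≤ -s / 6) :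
    A + 2 * B * q + 2 * C * r ≤ 0 ∧
      (A + 2 * B * q + 2 * C * r = 0 ↔ r = s ^ 2 / 3 ∧ q = -s / 6) := by
  have hsplit : A + 2 * B * q + 2 * C * r = -(2 * B * (-s / 6 - q) + 2 * C * (s ^ 2 / 3 - r)) := by
    linear_combination (1 / 3 : ℝ) * hs
  have hq' : 0 ≤ 2 * B * (-s / 6 - q) := by
    have := sub_nonneg.2 hq
    positivity
  have hr' : 0 ≤ 2 * C * (s ^ 2 / 3 - r) := by
    have := sub_nonneg.2 hr
    positivity
  refine ⟨by rw [hsplit]; linarith, ?_⟩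
  rw [hsplit, neg_eq_zero, add_eq_zero_iff_of_nonneg hq' hr']
  simp only [mul_eq_zero, hB.ne', hC.ne', OfNat.ofNat_ne_zero, false_or, sub_eq_zero]
  exact ⟨fun ⟨hq, hr⟩ => ⟨hr.symm, hq.symm⟩, fun ⟨hr, hq⟩ => ⟨hq.symm, hr.symm⟩⟩

lemma sq_add_three_mul_sq_eq_and_eq_iff {s q₁ q₃ : ℝ} (hs : 0 ≤ s) :
    (q₁ ^ 2 + 3 * q₃ ^ 2 = s ^ 2 / 3 ∧ q₃ = -s / 6) ↔ (|q₁| = s / 2 ∧ q₃ = -s / 6) := by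
  refine and_congr_left fun hq₃ => ?_
  subst hq₃
  rw [← abs_of_nonneg (by positivity : 0 ≤ s / 2), ← sq_eq_sq_iff_abs_eq_abs]
  constructor <;> intro h <;> linarith

/-- algebraic step in Proposition prop:unstable: if
`q₁² + 3q₃² ≤ s₊²/3` and `q₃ ≤ −s₊/6` then `A + 2Bq₃ + 2C(q₁² + 3q₃²) ≤ 0`,
with equality iff `|q₁| = s₊/2` and `q₃ = −s₊/6`. -/
theorem statement_11 (A B C q1 q3 : ℝ) (hA : A < 0) (hB : 0 < B) (hC : 0 < C)
    (h1 : q1 ^ 2 + 3 * q3 ^ 2 ≤ (splus A B C) ^ 2 / 3)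
    (h2 : q3 ≤ -(splus A B C) / 6) :
    A + 2 * B * q3 + 2 * C * (q1 ^ 2 + 3 * q3 ^ 2) ≤ 0 ∧
    (A + 2 * B * q3 + 2 * C * (q1 ^ 2 + 3 * q3 ^ 2) = 0 ↔
      |q1| = splus A B C / 2 ∧ q3 = -(splus A B C) / 6) := by
  have hroot := splus_quadratic A B hC
  rw [abs_of_neg hA] at hroot
  rw [← sq_add_three_mul_sq_eq_and_eq_iff (splus_pos A hB hC).le]
  exact affine_add_quadratic_nonpos_iff hB hC (by linarith) h1 h2
end
end
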